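/- arXiv:2601.00733 — 8 statements merged into one kernel-verified Lean document; each statement's English description precedes it below -/
import Mathlib

section
/- If X is a CZ-space of countable pseudocharacter, then every countable subset of X is a G_δ-set (i.e., X is a λ-space). -/
/-- `A` is a zero set: the preimage of `{0}` under a continuous real-valued function. -/
def IsZeroSet {X : Type*} [TopologicalSpace X] (A : Set X) : Prop :=
  ∃ f : X → ℝ, Continuous f ∧ A = f ⁻¹' {0}

/-- `A` is a cozero set: the complement of a zero set. -/
def IsCozeroSet {X : Type*} [TopologicalSpace X] (A : Set X) : Prop :=
  IsZeroSet Aᶜ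

/-- `A` is a `Zer_σ`-set: a countable union of zero sets. -/
def IsZerSigma {X : Type*} [TopologicalSpace X] (A : Set X) : Prop :=
  ∃ Z : ℕ → Set X, (∀ n, IsZeroSet (Z n)) ∧ A = ⋃ n, Z n

/-- `A` is a `Coz_δ`-set: a countable intersection of cozero sets. -/
def IsCozDelta {X : Type*} [TopologicalSpace X] (A : Set X) : Prop :=
  ∃ U : ℕ → Set X, (∀ n, IsCozeroSet (U n)) ∧ A = ⋂ n, U n

/-- `A` is a `CZ`-set: simultaneously a `Zer_σ`-set and a `Coz_δ`-set. -/
def IsCZSet {X : Type*} [TopologicalSpace X] (A : Set X) : Prop :=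
  IsZerSigma A ∧ IsCozDelta A

/-- `X` is a `CZ`-space: every `Zer_σ`-set is a `Coz_δ`-set. -/
def IsCZSpace (X : Type*) [TopologicalSpace X] : Prop :=
  ∀ A : Set X, IsZerSigma A → IsCozDelta A

/-- `A` is an `F_σ`-set: a countable union of closed sets. -/
def IsFSigma {X : Type*} [TopologicalSpace X] (A : Set X) : Prop :=
  ∃ F : ℕ → Set X, (∀ n, IsClosed (F n)) ∧ A = ⋃ n, F n

/-- `f` is of Baire class one: a pointwise limit of a sequence of continuous functions. -/
def IsBaireOne {X : Type*} [TopologicalSpace X] (f : X → ℝ) : Prop :=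
  ∃ g : ℕ → X → ℝ, (∀ n, Continuous (g n)) ∧
    ∀ x, Filter.Tendsto (fun n => g n x) Filter.atTop (nhds (f x))


open Set Filter unitInterval in
lemma isZeroSet_iInter {X : Type*} [TopologicalSpace X] {Z : ℕ → Set X}
    (h : ∀ n, IsZeroSet (Z n)) : IsZeroSet (⋂ n, Z n) := by
  choose f hfc hfZ using h
  set g : ℕ → X → ℝ := fun n x => min |f n x| 1 * (1/2 : ℝ)^n with hg
  have hgnonneg : ∀ n x, 0 ≤ g n x := fun n x =>
    mul_nonneg (le_min (abs_nonneg _) one_pos.le) (by positivity)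
  have hgle : ∀ n x, ‖g n x‖ ≤ (1/2 : ℝ)^n := by
    intro n x
    rw [Real.norm_eq_abs, abs_of_nonneg (hgnonneg n x)]
    calc min |f n x| 1 * (1/2:ℝ)^n ≤ 1 * (1/2:ℝ)^n := by
          apply mul_le_mul_of_nonneg_right (min_le_right _ _) (by positivity)
      _ = (1/2:ℝ)^n := one_mul _
  have hsum : Summable (fun n => (1/2 : ℝ)^n) :=
    summable_geometric_of_lt_one (by norm_num) (by norm_num)
  have hgsum : ∀ x, Summable (fun n => g n x) := fun x =>
    hsum.of_norm_bounded (fun n => hgle n x)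
  refine ⟨fun x => ∑' n, g n x, ?_, ?_⟩
  · exact continuous_tsum (fun n => (((hfc n).abs.min continuous_const).mul
      continuous_const)) hsum (fun n x => hgle n x)
  · ext x
    simp only [Set.mem_iInter, Set.mem_preimage, Set.mem_singleton_iff]
    constructor
    · intro hx
      have : ∀ n, g n x = 0 := by
        intro n
        have hxn : f n x = 0 := by
          have := hx n
          rw [hfZ n] at this
          exact this
        simp [hg, hxn]
      exact (tsum_congr this).trans tsum_zero
    · intro hx n
      rw [hfZ n]
      have hle : g n x ≤ ∑' m, g m x := Summable.le_tsum (hgsum x) n (fun m _ => hgnonneg m x)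
      rw [hx] at hle
      have h0 : g n x = 0 := le_antisymm hle (hgnonneg n x)
      have : min |f n x| 1 = 0 := by
        have hp : (0:ℝ) < (1/2:ℝ)^n := by positivity
        exact (mul_eq_zero.mp h0).resolve_right hp.ne'
      have habs : |f n x| = 0 := by
        rcases min_eq_iff.mp this with h1 | h1
        · exact h1.1
        · linarith [h1.1]
      simpa using abs_eq_zero.mp habs

open Set Filter unitInterval in
lemma isZeroSet_singleton {X : Type*} [TopologicalSpace X] [T35Space X] (x : X)
    (hpsi : ∃ U : ℕ → Set X, (∀ n, IsOpen (U n)) ∧ ({x} : Set X) = ⋂ n, U n) :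
    IsZeroSet ({x} : Set X) := by
  obtain ⟨U, hUo, hUx⟩ := hpsi
  have hxU : ∀ n, x ∈ U n := by
    intro n
    have : x ∈ ⋂ n, U n := hUx ▸ rfl
    exact Set.mem_iInter.mp this n
  have key : ∀ n, ∃ Z : Set X, IsZeroSet Z ∧ x ∈ Z ∧ Z ⊆ U n := by
    intro n
    obtain ⟨f, hfc, hfx, hfK⟩ := CompletelyRegularSpace.completely_regular x (U n)ᶜ
      (hUo n).isClosed_compl (by simp [hxU n])
    refine ⟨(fun y => (f y : ℝ)) ⁻¹' {0}, ⟨_, continuous_subtype_val.comp hfc, rfl⟩, ?_, ?_⟩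
    · simp [hfx]
    · intro y hy
      by_contra hyU
      have := hfK hyU
      simp only [Set.mem_preimage, Set.mem_singleton_iff] at hy
      rw [this] at hy
      norm_num at hy
  choose Z hZ hxZ hZU using key
  have heq : ({x} : Set X) = ⋂ n, Z n := by
    apply Set.Subset.antisymm
    · intro y hy
      rw [Set.mem_singleton_iff] at hy
      subst hy
      exact Set.mem_iInter.mpr hxZ
    · intro y hy
      rw [hUx]
      exact Set.mem_iInter.mpr fun n => hZU n (Set.mem_iInter.mp hy n)
  rw [heq]
  exact isZeroSet_iInter hZ

/-- A `CZ`-space of countable pseudocharacter is a `λ`-space: every countable subset is `G_δ`. -/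
theorem czSpace_countablePseudocharacter_lambda {X : Type*} [TopologicalSpace X] [T35Space X]
    (hCZ : IsCZSpace X)
    (hpsi : ∀ x : X, ∃ U : ℕ → Set X, (∀ n, IsOpen (U n)) ∧ ({x} : Set X) = ⋂ n, U n) :
    ∀ A : Set X, A.Countable → IsGδ A := by
  intro A hA
  rcases A.eq_empty_or_nonempty with rfl | hne
  · exact IsGδ.empty
  obtain ⟨e, rfl⟩ := hA.exists_eq_range hne
  have hZσ : IsZerSigma (Set.range e) := by
    refine ⟨fun n => {e n}, fun n => isZeroSet_singleton (e n) (hpsi (e n)), ?_⟩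
    ext y; simp [Set.mem_range, eq_comm]
  obtain ⟨U, hU, hEq⟩ := hCZ _ hZσ
  rw [hEq]
  refine IsGδ.iInter_of_isOpen fun n => ?_
  obtain ⟨f, hfc, hfe⟩ := hU n
  have : U n = f ⁻¹' {0}ᶜ := by
    rw [← compl_compl (U n), hfe]; simp [Set.preimage_compl]
  rw [this]
  exact (isOpen_compl_singleton).preimage hfc
end

section
/- Let Y be a z-embedded subspace of a Tychonoff space X. If M ⊆ Y is a Zer_σ-set in Y, then there exists a Zer_σ-set L in X such that L ∩ Y = M; and similarly for Coz_δ-sets. Consequently, if X is a CZ-space then Y is a CZ-space. -/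
lemma zeroSet_preimage {X : Type*} [TopologicalSpace X] (Y : Set X) {B : Set X}
    (hB : IsZeroSet B) : IsZeroSet (Subtype.val ⁻¹' B : Set Y) := by
  obtain ⟨f, hf, hBf⟩ := hB
  exact ⟨f ∘ Subtype.val, hf.comp continuous_subtype_val, by rw [hBf]; rfl⟩

lemma cozeroSet_preimage {X : Type*} [TopologicalSpace X] (Y : Set X) {B : Set X}
    (hB : IsCozeroSet B) : IsCozeroSet (Subtype.val ⁻¹' B : Set Y) := by
  have := zeroSet_preimage Y hB
  simpa [IsCozeroSet, Set.preimage_compl] using this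

/-- If `Y` is `z`-embedded in `X`, then `Zer_σ`- and `Coz_δ`-sets of `Y` are traces of such
sets of `X`; consequently, if `X` is a `CZ`-space then so is `Y`. -/
theorem zEmbedded_trace_and_CZ {X : Type*} [TopologicalSpace X] [T35Space X] (Y : Set X)
    (hz : ∀ A : Set Y, IsZeroSet A → ∃ B : Set X, IsZeroSet B ∧ (Subtype.val ⁻¹' B : Set Y) = A) :
    (∀ M : Set Y, IsZerSigma M →
        ∃ L : Set X, IsZerSigma L ∧ (Subtype.val ⁻¹' L : Set Y) = M) ∧
    (∀ M : Set Y, IsCozDelta M →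
        ∃ L : Set X, IsCozDelta L ∧ (Subtype.val ⁻¹' L : Set Y) = M) ∧
    (IsCZSpace X → IsCZSpace Y) := by
  have zer : ∀ M : Set Y, IsZerSigma M →
      ∃ L : Set X, IsZerSigma L ∧ (Subtype.val ⁻¹' L : Set Y) = M := by
    intro M ⟨Z, hZ, hM⟩
    choose B hB hBZ using fun n => hz (Z n) (hZ n)
    refine ⟨⋃ n, B n, ⟨B, hB, rfl⟩, ?_⟩
    simp only [Set.preimage_iUnion, hBZ, hM]
  have hcozX : ∀ A : Set X, IsCozDelta A →
      IsCozDelta (Subtype.val ⁻¹' A : Set Y) := by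
    rintro A ⟨U, hU, rfl⟩
    exact ⟨fun n => Subtype.val ⁻¹' U n, fun n => cozeroSet_preimage Y (hU n),
      by simp [Set.preimage_iInter]⟩
  have coz : ∀ M : Set Y, IsCozDelta M →
      ∃ L : Set X, IsCozDelta L ∧ (Subtype.val ⁻¹' L : Set Y) = M := by
    intro M ⟨U, hU, hM⟩
    have key : ∀ n, ∃ B : Set X, IsCozeroSet B ∧ (Subtype.val ⁻¹' B : Set Y) = U n := by
      intro n
      obtain ⟨B, hB, hBU⟩ := hz (U n)ᶜ (hU n)
      refine ⟨Bᶜ, by simpa [IsCozeroSet] using hB, ?_⟩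
      rw [Set.preimage_compl, hBU, compl_compl]
    choose B hB hBU using key
    refine ⟨⋂ n, B n, ⟨B, hB, rfl⟩, ?_⟩
    simp only [Set.preimage_iInter, hBU, hM]
  refine ⟨zer, coz, ?_⟩
  intro hX M hM
  obtain ⟨L, hL, hLM⟩ := zer M hM
  have := hcozX L (hX L hL)
  rwa [hLM] at this
end

section
/- Every functionally countable Tychonoff space is a CZ-space: every countable union of zero sets is also a countable intersection of cozero sets. -/
/-- Every functionally countable Tychonoff space is a `CZ`-space. -/
theorem functionallyCountable_isCZSpace {X : Type*} [TopologicalSpace X] [T35Space X]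
    (hfc : ∀ f : X → (ℕ → ℝ), Continuous f → (Set.range f).Countable) :
    IsCZSpace X := by
  intro A hA
  obtain ⟨Z, hZ, rfl⟩ := hA
  choose f hf hZf using hZ
  set F : X → (ℕ → ℝ) := fun x n => f n x with hFdef
  have hFc : Continuous F := continuous_pi fun n => hf n
  set T : Set (ℕ → ℝ) := Set.range F ∩ {g | ∀ n, g n ≠ 0} with hTdef
  have hTc : T.Countable := (hfc F hFc).mono Set.inter_subset_left
  have hmem : ∀ x : X, x ∈ (⋃ n, Z n) ↔ F x ∉ T := by
    intro x
    simp only [Set.mem_iUnion, hTdef, Set.mem_inter_iff, Set.mem_setOf_eq,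
      Set.mem_range, not_and, not_forall, not_not]
    constructor
    · rintro ⟨n, hn⟩ _
      rw [hZf n] at hn
      exact ⟨n, hn⟩
    · intro h
      obtain ⟨n, hn⟩ := h ⟨x, rfl⟩
      exact ⟨n, by rw [hZf n]; exact hn⟩
  rcases T.eq_empty_or_nonempty with hTe | hTne
  · refine ⟨fun _ => Set.univ, fun n => ⟨fun _ => 1, continuous_const, ?_⟩, ?_⟩
    · ext x; simp
    · ext x
      simp only [Set.mem_iInter, Set.mem_univ, iff_true, forall_const]
      rw [hmem x, hTe]
      exact Set.notMem_empty _
  · obtain ⟨y, hy⟩ := Set.Countable.exists_eq_range hTc hTne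
    letI : MetricSpace (ℕ → ℝ) := TopologicalSpace.metrizableSpaceMetric _
    refine ⟨fun n => (F ⁻¹' {y n})ᶜ, fun n => ?_, ?_⟩
    · refine ⟨fun x => dist (F x) (y n), (continuous_dist.comp (hFc.prodMk continuous_const)), ?_⟩
      rw [compl_compl]
      ext x
      simp [dist_eq_zero]
    · ext x
      rw [hmem x, hy]
      simp only [Set.mem_iInter, Set.mem_compl_iff, Set.mem_preimage,
        Set.mem_singleton_iff, Set.mem_range]
      constructor
      · intro h n hn; exact h ⟨n, hn.symm⟩
      · rintro h ⟨n, hn⟩; exact h n hn.symm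
end

section
/- A compact Hausdorff space X is a CZ-space if and only if X is scattered. -/
/-- `X` is scattered: every nonempty subset has a point isolated in it. -/
def IsScattered (X : Type*) [TopologicalSpace X] : Prop :=
  ∀ S : Set X, S.Nonempty → ∃ x ∈ S, ∃ U : Set X, IsOpen U ∧ U ∩ S = {x}

open Set

section ZS
variable {X : Type*} [TopologicalSpace X]

theorem zs_univ : IsZeroSet (univ : Set X) :=
  ⟨fun _ => 0, continuous_const, by ext x; simp⟩

theorem zs_empty : IsZeroSet (∅ : Set X) :=
  ⟨fun _ => 1, continuous_const, by ext x; simp⟩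

theorem zs_closed {A : Set X} (h : IsZeroSet A) : IsClosed A := by
  obtain ⟨f, hf, rfl⟩ := h
  exact isClosed_singleton.preimage hf

theorem zs_inter {A B : Set X} (hA : IsZeroSet A) (hB : IsZeroSet B) :
    IsZeroSet (A ∩ B) := by
  obtain ⟨f, hf, rfl⟩ := hA
  obtain ⟨g, hg, rfl⟩ := hB
  refine ⟨fun x => |f x| + |g x|, (hf.abs.add hg.abs), ?_⟩
  ext x
  simp only [mem_inter_iff, mem_preimage, mem_singleton_iff]
  constructor
  · rintro ⟨h1, h2⟩; simp [h1, h2]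
  · intro h
    have h1 : |f x| = 0 ∧ |g x| = 0 := by
      constructor <;> nlinarith [abs_nonneg (f x), abs_nonneg (g x)]
    exact ⟨abs_eq_zero.1 h1.1, abs_eq_zero.1 h1.2⟩

theorem zs_le {f : X → ℝ} (hf : Continuous f) (c : ℝ) : IsZeroSet {x | f x ≤ c} := by
  refine ⟨fun x => max (f x - c) 0, (hf.sub continuous_const).max continuous_const, ?_⟩
  ext x
  simp only [mem_setOf_eq, mem_preimage, mem_singleton_iff, max_eq_right_iff]
  constructor <;> intro h <;> linarith

theorem zs_ge {f : X → ℝ} (hf : Continuous f) (c : ℝ) : IsZeroSet {x | c ≤ f x} := by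
  have := zs_le (f := fun x => -f x) hf.neg (-c)
  convert this using 1
  ext x; simp

theorem zs_preimage_singleton {f : X → ℝ} (hf : Continuous f) (c : ℝ) :
    IsZeroSet (f ⁻¹' {c}) :=
  ⟨fun x => f x - c, hf.sub continuous_const, by ext x; simp [sub_eq_zero]⟩

theorem zs_iInter {Z : ℕ → Set X} (hZ : ∀ n, IsZeroSet (Z n)) :
    IsZeroSet (⋂ n, Z n) := by
  choose f hf hfZ using hZ
  set g : ℕ → X → ℝ := fun n x => (1/2)^n * min |f n x| 1 with hg
  have hcont : ∀ n, Continuous (g n) := fun n =>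
    continuous_const.mul ((hf n).abs.min continuous_const)
  have hnonneg : ∀ n x, 0 ≤ g n x := by
    intro n x
    apply mul_nonneg (by positivity)
    exact le_min (abs_nonneg _) zero_le_one
  have hbound : ∀ n x, ‖g n x‖ ≤ (1/2:ℝ)^n := by
    intro n x
    rw [Real.norm_eq_abs, abs_of_nonneg (hnonneg n x), hg]
    have : min |f n x| 1 ≤ 1 := min_le_right _ _
    have h2 : (0:ℝ) ≤ (1/2:ℝ)^n := by positivity
    simp only []
    nlinarith
  have hsum : ∀ x, Summable fun n => g n x := fun x =>
    Summable.of_norm_bounded summable_geometric_two (fun n => hbound n x)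
  refine ⟨fun x => ∑' n, g n x, continuous_tsum hcont summable_geometric_two hbound, ?_⟩
  ext x
  simp only [mem_iInter, mem_preimage, mem_singleton_iff]
  constructor
  · intro h
    have : ∑' n, g n x = 0 := by
      rw [show (0:ℝ) = ∑' _ : ℕ, (0:ℝ) by simp]
      congr 1; ext n
      have hx : x ∈ Z n := h n
      rw [hfZ n] at hx
      simp only [mem_preimage, mem_singleton_iff] at hx
      simp [hg, hx]
    exact this
  · intro h n
    have hle : g n x ≤ ∑' m, g m x := Summable.le_tsum (hsum x) n (fun m _ => hnonneg m x)
    rw [h] at hle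
    have : g n x = 0 := le_antisymm hle (hnonneg n x)
    rw [hg] at this
    simp only [mul_eq_zero] at this
    rcases this with h1 | h1
    · exact absurd h1 (by positivity : ((1:ℝ)/2)^n ≠ 0).elim
    · rw [hfZ n]
      simp only [mem_preimage, mem_singleton_iff]
      rcases min_eq_iff.1 h1 with ⟨h2, _⟩ | ⟨h2, h3⟩
      · exact abs_eq_zero.1 h2
      · linarith

end ZS

open Set Filter Topology

/-- eventually-false branches -/
def Qset : Set (ℕ → Bool) := {σ | ∃ N, ∀ n, N ≤ n → σ n = false}

theorem Qset_countable : Qset.Countable := by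
  have : Qset = ⋃ N : ℕ, {σ : ℕ → Bool | ∀ n, N ≤ n → σ n = false} := by
    ext σ; simp [Qset]
  rw [this]
  refine countable_iUnion fun N => Set.Finite.countable ?_
  apply Set.Finite.of_finite_image (f := fun σ => fun i : Fin N => σ i.1)
  · exact Set.Finite.subset (Set.finite_univ) (subset_univ _)
  · intro σ hσ τ hτ h
    funext n
    by_cases hn : n < N
    · exact congrFun h ⟨n, hn⟩
    · rw [hσ n (not_lt.1 hn), hτ n (not_lt.1 hn)]

theorem Qset_nonempty : Qset.Nonempty := ⟨fun _ => false, 0, fun _ _ => rfl⟩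

theorem tendsto_of_eventually_eq {α : Type*} [TopologicalSpace α] {f : ℕ → α} {a : α}
    (h : ∀ᶠ N in atTop, f N = a) : Tendsto f atTop (𝓝 a) :=
  tendsto_const_nhds.congr' (h.mono fun _ hN => hN.symm)

theorem Qset_dense : Dense Qset := by
  intro σ
  have ht : Tendsto (fun N => fun n => if n < N then σ n else false) atTop (𝓝 σ) := by
    rw [tendsto_pi_nhds]
    intro n
    apply tendsto_of_eventually_eq
    filter_upwards [eventually_ge_atTop (n+1)] with N hN
    simp [Nat.lt_of_lt_of_le (Nat.lt_succ_self n) hN]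
  exact mem_closure_of_tendsto ht (Eventually.of_forall fun N =>
    ⟨N, fun n hn => by simp [Nat.not_lt.2 hn]⟩)

theorem compl_singleton_dense (τ : ℕ → Bool) : Dense ({τ}ᶜ : Set (ℕ → Bool)) := by
  intro σ
  by_cases h : σ = τ
  · subst h
    have ht : Tendsto (fun N => fun n => if n = N then !σ n else σ n) atTop (𝓝 σ) := by
      rw [tendsto_pi_nhds]
      intro n
      apply tendsto_of_eventually_eq
      filter_upwards [eventually_ge_atTop (n+1)] with N hN
      simp [Nat.ne_of_lt (Nat.lt_of_lt_of_le (Nat.lt_succ_self n) hN)]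
    refine mem_closure_of_tendsto ht (Eventually.of_forall fun N => ?_)
    simp only [mem_compl_iff, mem_singleton_iff]
    intro hc
    have := congrFun hc N
    simp at this
  · exact subset_closure h

/-- A countable dense subset of Cantor space is not a Gδ. -/
theorem Qset_not_Gdelta (V : ℕ → Set (ℕ → Bool)) (hV : ∀ n, IsOpen (V n))
    (hQV : Qset = ⋂ n, V n) : False := by
  obtain ⟨e, he⟩ := Qset_countable.exists_eq_range Qset_nonempty
  set W : ℕ → Set (ℕ → Bool) := fun n => V n ∩ {e n}ᶜ with hW
  have hWo : ∀ n, IsOpen (W n) := fun n => (hV n).inter (isOpen_compl_singleton)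
  have hWd : ∀ n, Dense (W n) := by
    intro n
    have hVd : Dense (V n) := by
      apply Dense.mono _ Qset_dense
      rw [hQV]; exact iInter_subset _ n
    exact hVd.inter_of_isOpen_left (compl_singleton_dense (e n)) (hV n)
  have hd : Dense (⋂ n, W n) := dense_iInter_of_isOpen_nat hWo hWd
  obtain ⟨σ, hσ⟩ := hd.nonempty
  rw [mem_iInter] at hσ
  have hσQ : σ ∈ Qset := by
    rw [hQV, mem_iInter]; exact fun n => (hσ n).1
  rw [he] at hσQ
  obtain ⟨n, hn⟩ := hσQ
  exact (hσ n).2 (by simp [← hn])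

/-! ### The Cantor scheme construction: CZ implies scattered -/

section Scheme
variable {X : Type*} [TopologicalSpace X] [CompactSpace X] [T2Space X]

/-- invariant for the scheme: (zero set, open set) pairs -/
def Phi (P : Set X) (p : Set X × Set X) : Prop :=
  IsZeroSet p.1 ∧ IsOpen p.2 ∧ p.2 ⊆ p.1 ∧ (P ∩ p.2).Nonempty

theorem scheme_step {P : Set X} (hlim : ∀ x ∈ P, ∀ U : Set X, IsOpen U → x ∈ U →
      ∃ y ∈ P ∩ U, y ≠ x) {p : Set X × Set X} (hp : Phi P p) :
    ∃ qr : (Set X × Set X) × (Set X × Set X),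
      Phi P qr.1 ∧ Phi P qr.2 ∧ qr.1.1 ⊆ p.2 ∧ qr.2.1 ⊆ p.2 ∧ qr.1.1 ∩ qr.2.1 = ∅ := by
  obtain ⟨hZ, hW, hWZ, x, hxP, hxW⟩ := hp
  obtain ⟨y, ⟨hyP, hyW⟩, hyx⟩ := hlim x hxP p.2 hW hxW
  obtain ⟨f, hf0, hf1, -⟩ := exists_continuous_zero_one_of_isClosed
    (isClosed_singleton (x := x)) (isClosed_singleton (x := y))
    (by simp [Set.disjoint_singleton, Ne.symm hyx])
  obtain ⟨u, hu0, hu1, -⟩ := exists_continuous_zero_one_of_isClosed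
    (hW.isClosed_compl) (isClosed_singleton (x := x))
    (Set.disjoint_singleton_right.2 (by simp [hxW]))
  obtain ⟨v, hv0, hv1, -⟩ := exists_continuous_zero_one_of_isClosed
    (hW.isClosed_compl) (isClosed_singleton (x := y))
    (Set.disjoint_singleton_right.2 (by simp [hyW]))
  refine ⟨⟨⟨{z | f z ≤ 1/3} ∩ {z | 1/2 ≤ u z}, {z | f z < 1/3} ∩ {z | 1/2 < u z}⟩,
          ⟨{z | 2/3 ≤ f z} ∩ {z | 1/2 ≤ v z}, {z | 2/3 < f z} ∩ {z | 1/2 < v z}⟩⟩,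
    ⟨zs_inter (zs_le f.continuous _) (zs_ge u.continuous _),
     (isOpen_lt f.continuous continuous_const).inter (isOpen_lt continuous_const u.continuous),
     by intro z hz; simp only [Set.mem_inter_iff, Set.mem_setOf_eq] at hz ⊢
        exact ⟨hz.1.le, hz.2.le⟩, ⟨x, hxP, ?_, ?_⟩⟩,
    ⟨zs_inter (zs_ge f.continuous _) (zs_ge v.continuous _),
     (isOpen_lt continuous_const f.continuous).inter (isOpen_lt continuous_const v.continuous),
     by intro z hz; simp only [Set.mem_inter_iff, Set.mem_setOf_eq] at hz ⊢
        exact ⟨hz.1.le, hz.2.le⟩, ⟨y, hyP, ?_, ?_⟩⟩,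
    ?_, ?_, ?_⟩
  · show f x < 1/3
    rw [hf0 rfl]; norm_num
  · show 1/2 < u x
    rw [hu1 rfl]; norm_num
  · show 2/3 < f y
    rw [hf1 rfl]; norm_num
  · show 1/2 < v y
    rw [hv1 rfl]; norm_num
  · rintro z ⟨-, hz⟩
    simp only [Set.mem_setOf_eq] at hz
    by_contra hc
    have : u z = 0 := hu0 hc
    rw [this] at hz; norm_num at hz
  · rintro z ⟨-, hz⟩
    simp only [Set.mem_setOf_eq] at hz
    by_contra hc
    have : v z = 0 := hv0 hc
    rw [this] at hz; norm_num at hz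
  · ext z
    simp only [Set.mem_inter_iff, Set.mem_setOf_eq, Set.mem_empty_iff_false, iff_false]
    rintro ⟨⟨h1, -⟩, ⟨h2, -⟩⟩
    linarith

variable (P : Set X)

open Classical in
noncomputable def nxt (p : Set X × Set X) : (Set X × Set X) × (Set X × Set X) :=
  if h : Phi P p ∧ (∀ x ∈ P, ∀ U : Set X, IsOpen U → x ∈ U → ∃ y ∈ P ∩ U, y ≠ x) then
    Classical.choose (scheme_step h.2 h.1)
  else (p, p)

theorem nxt_spec {p : Set X × Set X} (hp : Phi P p)
    (hl : ∀ x ∈ P, ∀ U : Set X, IsOpen U → x ∈ U → ∃ y ∈ P ∩ U, y ≠ x) :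
    Phi P (nxt P p).1 ∧ Phi P (nxt P p).2 ∧ (nxt P p).1.1 ⊆ p.2 ∧
      (nxt P p).2.1 ⊆ p.2 ∧ (nxt P p).1.1 ∩ (nxt P p).2.1 = ∅ := by
  rw [nxt, dif_pos ⟨hp, hl⟩]
  exact Classical.choose_spec (scheme_step hl hp)

/-- the scheme, indexed by reversed binary strings -/
noncomputable def sch : List Bool → Set X × Set X
  | [] => (Set.univ, Set.univ)
  | b :: s => if b then (nxt P (sch s)).2 else (nxt P (sch s)).1

theorem sch_phi (hPne : P.Nonempty)
    (hl : ∀ x ∈ P, ∀ U : Set X, IsOpen U → x ∈ U → ∃ y ∈ P ∩ U, y ≠ x) :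
    ∀ s : List Bool, Phi P (sch P s) := by
  intro s
  induction s with
  | nil =>
    rw [sch]
    exact ⟨zs_univ, isOpen_univ, subset_rfl, by simpa using hPne⟩
  | cons b s ih =>
    obtain ⟨h1, h2, h3, h4, h5⟩ := nxt_spec P ih hl
    cases b
    · simpa [sch] using h1
    · simpa [sch] using h2

theorem sch_child (hPne : P.Nonempty)
    (hl : ∀ x ∈ P, ∀ U : Set X, IsOpen U → x ∈ U → ∃ y ∈ P ∩ U, y ≠ x) (b : Bool)
    (s : List Bool) : (sch P (b :: s)).1 ⊆ (sch P s).2 := by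
  obtain ⟨h1, h2, h3, h4, h5⟩ := nxt_spec P (sch_phi P hPne hl s) hl
  cases b
  · simpa [sch] using h3
  · simpa [sch] using h4

theorem sch_mono (hPne : P.Nonempty)
    (hl : ∀ x ∈ P, ∀ U : Set X, IsOpen U → x ∈ U → ∃ y ∈ P ∩ U, y ≠ x) (b : Bool)
    (s : List Bool) : (sch P (b :: s)).1 ⊆ (sch P s).1 :=
  (sch_child P hPne hl b s).trans (sch_phi P hPne hl s).2.2.1

theorem sch_sibling (hPne : P.Nonempty)
    (hl : ∀ x ∈ P, ∀ U : Set X, IsOpen U → x ∈ U → ∃ y ∈ P ∩ U, y ≠ x)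
    (s : List Bool) : (sch P (false :: s)).1 ∩ (sch P (true :: s)).1 = ∅ := by
  obtain ⟨h1, h2, h3, h4, h5⟩ := nxt_spec P (sch_phi P hPne hl s) hl
  simpa [sch] using h5

theorem sch_disjoint (hPne : P.Nonempty)
    (hl : ∀ x ∈ P, ∀ U : Set X, IsOpen U → x ∈ U → ∃ y ∈ P ∩ U, y ≠ x) :
    ∀ s t : List Bool, s.length = t.length → s ≠ t →
      (sch P s).1 ∩ (sch P t).1 = ∅ := by
  intro s
  induction s with
  | nil =>
    intro t hlen hne
    cases t
    · exact absurd rfl hne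
    · simp at hlen
  | cons b s ih =>
    intro t hlen hne
    cases t with
    | nil => simp at hlen
    | cons c t =>
      simp only [List.length_cons, Nat.add_right_cancel_iff] at hlen
      by_cases hst : s = t
      · subst hst
        have hbc : b ≠ c := by rintro rfl; exact hne rfl
        cases b <;> cases c <;> try (exact absurd rfl hbc)
        · exact sch_sibling P hPne hl s
        · rw [Set.inter_comm]; exact sch_sibling P hPne hl s
      · apply Set.eq_empty_of_subset_empty
        calc (sch P (b :: s)).1 ∩ (sch P (c :: t)).1
            ⊆ (sch P s).1 ∩ (sch P t).1 :=
              Set.inter_subset_inter (sch_mono P hPne hl b s) (sch_mono P hPne hl c t)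
          _ = ∅ := ih t hlen hst

end Scheme

section Branches
variable {X : Type*} [TopologicalSpace X] [CompactSpace X] [T2Space X]
variable (P : Set X)

/-- reversed initial segment of a branch -/
def str (σ : ℕ → Bool) : ℕ → List Bool
  | 0 => []
  | n+1 => σ n :: str σ n

theorem str_length (σ : ℕ → Bool) : ∀ n, (str σ n).length = n
  | 0 => rfl
  | n+1 => by simp [str, str_length σ n]

/-- the compact set along a branch -/
noncomputable def Kb (σ : ℕ → Bool) : Set X := ⋂ n, (sch P (str σ n)).1

/-- the "Cantor-like" compact set -/
noncomputable def Tset : Set X :=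
  ⋂ n, ⋃ s ∈ {l : List Bool | l.length = n}, (sch P s).1

/-- unions at level n with prescribed last bit -/
noncomputable def lvl (b : Bool) (n : ℕ) : Set X :=
  ⋃ s ∈ {l : List Bool | l.length = n}, (sch P (b :: s)).1

open Classical in
/-- the branch of a point -/
noncomputable def bits (x : X) (n : ℕ) : Bool :=
  decide (x ∈ lvl P true n)

variable {P} (hPne : P.Nonempty) (hPc : IsClosed P)
variable (hl : ∀ x ∈ P, ∀ U : Set X, IsOpen U → x ∈ U → ∃ y ∈ P ∩ U, y ≠ x)

include hPne hl in
theorem mem_unique {x : X} {s t : List Bool} (hs : x ∈ (sch P s).1)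
    (ht : x ∈ (sch P t).1) (hlen : s.length = t.length) : s = t := by
  by_contra hne
  have := sch_disjoint P hPne hl s t hlen hne
  rw [Set.eq_empty_iff_forall_notMem] at this
  exact this x ⟨hs, ht⟩

include hPne hl in
theorem Kb_zeroSet (σ : ℕ → Bool) : IsZeroSet (Kb P σ) :=
  zs_iInter fun n => (sch_phi P hPne hl (str σ n)).1

include hPne hPc hl in
theorem Kb_nonempty (σ : ℕ → Bool) : (Kb P σ).Nonempty := by
  have h := IsCompact.nonempty_iInter_of_sequence_nonempty_isCompact_isClosed
    (fun n => (sch P (str σ n)).1 ∩ P)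
    (fun n => Set.inter_subset_inter_left P (sch_mono P hPne hl (σ n) (str σ n)))
    (fun n => by
      obtain ⟨x, hxP, hxW⟩ := (sch_phi P hPne hl (str σ n)).2.2.2
      exact ⟨x, (sch_phi P hPne hl (str σ n)).2.2.1 hxW, hxP⟩)
    (((zs_closed (sch_phi P hPne hl (str σ 0)).1).inter hPc).isCompact)
    (fun n => (zs_closed (sch_phi P hPne hl (str σ n)).1).inter hPc)
  obtain ⟨x, hx⟩ := h
  rw [Set.mem_iInter] at hx
  exact ⟨x, Set.mem_iInter.2 fun n => (hx n).1⟩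

theorem Kb_subset_Tset (σ : ℕ → Bool) : Kb P σ ⊆ Tset P := by
  intro x hx
  rw [Kb, Set.mem_iInter] at hx
  rw [Tset, Set.mem_iInter]
  intro n
  exact Set.mem_biUnion (str_length σ n) (hx n)

theorem mem_lvl_iff {x : X} {b : Bool} {n : ℕ} :
    x ∈ lvl P b n ↔ ∃ s : List Bool, s.length = n ∧ x ∈ (sch P (b :: s)).1 := by
  simp [lvl]

theorem bits_true_iff {x : X} {n : ℕ} : bits P x n = true ↔ x ∈ lvl P true n := by
  simp [bits]

include hPne hl in
theorem bits_spec {x : X} (hx : x ∈ Tset P) :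
    ∀ n, x ∈ (sch P (str (bits P x) n)).1 := by
  intro n
  induction n with
  | zero =>
    rw [str, sch]
    trivial
  | succ n ih =>
    have hxn : x ∈ ⋃ s ∈ {l : List Bool | l.length = n+1}, (sch P s).1 := by
      rw [Tset, Set.mem_iInter] at hx
      exact hx (n+1)
    simp only [Set.mem_setOf_eq, Set.mem_iUnion, exists_prop] at hxn
    obtain ⟨s, hslen, hxs⟩ := hxn
    cases s with
    | nil => simp at hslen
    | cons b t =>
      simp only [List.length_cons, Nat.add_right_cancel_iff] at hslen
      have hxt : x ∈ (sch P t).1 := sch_mono P hPne hl b t hxs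
      have ht : t = str (bits P x) n :=
        mem_unique hPne hl hxt ih (hslen.trans (str_length _ n).symm)
      subst ht
      have hb : bits P x n = b := by
        cases b
        · cases hbb : bits P x n
          · rfl
          · exfalso
            obtain ⟨s', hs'len, hxs'⟩ := mem_lvl_iff.1 (bits_true_iff.1 hbb)
            have : (true : Bool) :: s' = false :: str (bits P x) n :=
              mem_unique hPne hl hxs' hxs (by simp [hs'len, str_length])
            simp at this
        · exact bits_true_iff.2 (mem_lvl_iff.2 ⟨str (bits P x) n, str_length _ n, hxs⟩)
      rw [str, hb]
      exact hxs

include hPne hl in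
theorem bits_eq {x : X} {σ : ℕ → Bool} (hx : x ∈ Tset P) (hK : x ∈ Kb P σ) :
    bits P x = σ := by
  funext n
  have h1 : x ∈ (sch P (str (bits P x) (n+1))).1 := bits_spec hPne hl hx (n+1)
  have h2 : x ∈ (sch P (str σ (n+1))).1 := Set.mem_iInter.1 hK (n+1)
  have := mem_unique hPne hl h1 h2 (by rw [str_length, str_length])
  rw [str, str] at this
  exact (List.cons_eq_cons.1 this).1

include hPne hl in
theorem x_mem_Kb_bits {x : X} (hx : x ∈ Tset P) : x ∈ Kb P (bits P x) :=
  Set.mem_iInter.2 (bits_spec hPne hl hx)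

include hPne hl in
theorem lvl_closed (b : Bool) (n : ℕ) : IsClosed (lvl P b n) :=
  (List.finite_length_eq Bool n).isClosed_biUnion
    fun s _ => zs_closed (sch_phi P hPne hl (b :: s)).1

include hPne hl in
theorem Tset_closed : IsClosed (Tset P) :=
  isClosed_iInter fun n => (List.finite_length_eq Bool n).isClosed_biUnion
    fun s _ => zs_closed (sch_phi P hPne hl s).1

include hPne hl in
theorem bits_false_iff {x : X} (hx : x ∈ Tset P) {n : ℕ} :
    bits P x n = false ↔ x ∈ lvl P false n := by
  constructor
  · intro hb
    have := bits_spec hPne hl hx (n+1)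
    rw [str, hb] at this
    exact mem_lvl_iff.2 ⟨str (bits P x) n, str_length _ n, this⟩
  · intro hmem
    cases hbb : bits P x n
    · rfl
    · exfalso
      obtain ⟨s, hslen, hxs⟩ := mem_lvl_iff.1 hmem
      obtain ⟨s', hs'len, hxs'⟩ := mem_lvl_iff.1 (bits_true_iff.1 hbb)
      have : (false : Bool) :: s = true :: s' :=
        mem_unique hPne hl hxs hxs' (by simp [hslen, hs'len])
      simp at this

include hPne hl in
theorem bits_continuous : Continuous (fun x : Tset P => bits P x.1) := by
  apply continuous_pi
  intro n
  rw [continuous_discrete_rng]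
  intro b
  cases b
  · -- preimage of {false} is the complement of val ⁻¹' (lvl P true n)
    have : (fun x : Tset P => bits P x.1 n) ⁻¹' {false} =
        (fun x : Tset P => x.1) ⁻¹' (lvl P true n)ᶜ := by
      ext x
      simp only [Set.mem_preimage, Set.mem_singleton_iff, Set.mem_compl_iff]
      rw [← bits_true_iff (P := P)]
      cases h : bits P x.1 n <;> simp
    rw [this]
    exact (lvl_closed hPne hl true n).isOpen_compl.preimage continuous_subtype_val
  · -- preimage of {true} is the complement of val ⁻¹' (lvl P false n)
    have : (fun x : Tset P => bits P x.1 n) ⁻¹' {true} =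
        (fun x : Tset P => x.1) ⁻¹' (lvl P false n)ᶜ := by
      ext x
      simp only [Set.mem_preimage, Set.mem_singleton_iff, Set.mem_compl_iff]
      rw [← bits_false_iff hPne hl x.2]
      cases h : bits P x.1 n <;> simp
    rw [this]
    exact (lvl_closed hPne hl false n).isOpen_compl.preimage continuous_subtype_val

end Branches

/-! ### CZ implies scattered -/

theorem cz_implies_scattered {X : Type*} [TopologicalSpace X] [CompactSpace X] [T2Space X]
    (hCZ : ∀ A : Set X, (∃ Z : ℕ → Set X, (∀ n, IsZeroSet (Z n)) ∧ A = ⋃ n, Z n) →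
      (∃ U : ℕ → Set X, (∀ n, IsZeroSet (U n)ᶜ) ∧ A = ⋂ n, U n)) :
    ∀ S : Set X, S.Nonempty → ∃ x ∈ S, ∃ U : Set X, IsOpen U ∧ U ∩ S = {x} := by
  by_contra hns
  push_neg at hns
  obtain ⟨S, hSne, hS⟩ := hns
  set P := closure S with hPdef
  have hPne : P.Nonempty := hSne.closure
  have hPc : IsClosed P := isClosed_closure
  have hl : ∀ x ∈ P, ∀ U : Set X, IsOpen U → x ∈ U → ∃ y ∈ P ∩ U, y ≠ x := by
    intro x hxP U hU hxU
    by_contra hc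
    push_neg at hc
    have hsub : U ∩ S ⊆ {x} := fun y hy =>
      hc y ⟨subset_closure hy.2, hy.1⟩
    obtain ⟨y, hyU, hyS⟩ := mem_closure_iff.1 hxP U hU hxU
    have hyx : y = x := hsub ⟨hyU, hyS⟩
    subst hyx
    have : U ∩ S = {y} := Set.Subset.antisymm hsub (by simp [hyU, hyS])
    exact hS y hyS U hU this
  obtain ⟨e, he⟩ := Qset_countable.exists_eq_range Qset_nonempty
  set A : Set X := ⋃ m, Kb P (e m) with hAdef
  obtain ⟨U, hU, hAU⟩ := hCZ A ⟨fun m => Kb P (e m),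
    fun m => Kb_zeroSet hPne hl (e m), rfl⟩
  have hUopen : ∀ n, IsOpen (U n) := by
    intro n
    rw [← compl_compl (U n)]
    exact (zs_closed (hU n)).isOpen_compl
  haveI : CompactSpace (Tset P) :=
    isCompact_iff_compactSpace.1 (Tset_closed hPne hl).isCompact
  set π : Tset P → (ℕ → Bool) := fun x => bits P x.1 with hπ
  set M : ℕ → Set (ℕ → Bool) := fun n => π '' {x : Tset P | x.1 ∉ U n} with hM
  have hMclosed : ∀ n, IsClosed (M n) := by
    intro n
    have h1 : IsClosed {x : Tset P | x.1 ∉ U n} :=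
      (hUopen n).isClosed_compl.preimage continuous_subtype_val
    exact (h1.isCompact.image (bits_continuous hPne hl)).isClosed
  apply Qset_not_Gdelta (fun n => (M n)ᶜ) (fun n => (hMclosed n).isOpen_compl)
  ext σ
  simp only [Set.mem_iInter, Set.mem_compl_iff]
  constructor
  · intro hσ n
    rintro ⟨x, hxU, hbx⟩
    have hxK : x.1 ∈ Kb P (bits P x.1) := x_mem_Kb_bits hPne hl x.2
    rw [hπ] at hbx
    simp only at hbx
    rw [hbx] at hxK
    rw [he] at hσ
    obtain ⟨m, hm⟩ := hσ
    have hxA : x.1 ∈ A := Set.mem_iUnion.2 ⟨m, hm ▸ hxK⟩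
    rw [hAU] at hxA
    exact hxU (Set.mem_iInter.1 hxA n)
  · intro h
    obtain ⟨x, hx⟩ := Kb_nonempty hPne hPc hl σ
    have hxT : x ∈ Tset P := Kb_subset_Tset σ hx
    have hbits : bits P x = σ := bits_eq hPne hl hxT hx
    have hxU : ∀ n, x ∈ U n := by
      intro n
      by_contra hc
      exact h n ⟨⟨x, hxT⟩, hc, hbits⟩
    have hxA : x ∈ A := by rw [hAU]; exact Set.mem_iInter.2 hxU
    obtain ⟨m, hm⟩ := Set.mem_iUnion.1 hxA
    have : bits P x = e m := bits_eq hPne hl hxT hm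
    rw [he]
    exact ⟨m, this ▸ hbits.symm ▸ rfl⟩

/-! ### Scattered implies CZ -/

theorem isolated_of_isolated_closure {Y : Type*} [TopologicalSpace Y] {S : Set Y} {x : Y}
    {U : Set Y} (hU : IsOpen U) (h : U ∩ closure S = {x}) : x ∈ S ∧ U ∩ S = {x} := by
  have hxU : x ∈ U ∧ x ∈ closure S := by
    have : x ∈ U ∩ closure S := h ▸ rfl
    exact this
  have hsub : U ∩ S ⊆ {x} := fun y hy => h ▸ (⟨hy.1, subset_closure hy.2⟩ : y ∈ U ∩ closure S)
  obtain ⟨y, hyU, hyS⟩ := mem_closure_iff.1 hxU.2 U hU hxU.1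
  have : y = x := hsub ⟨hyU, hyS⟩
  subst this
  exact ⟨hyS, Set.Subset.antisymm hsub (by simp [hyU, hyS])⟩

/-- The continuous image of a scattered compact Hausdorff space is scattered. -/
theorem scattered_image {X Y : Type*} [TopologicalSpace X] [CompactSpace X] [T2Space X]
    [TopologicalSpace Y] [T2Space Y] (hX : IsScattered X) {F : X → Y} (hF : Continuous F)
    {S : Set Y} (hSne : S.Nonempty) (hSr : S ⊆ Set.range F) :
    ∃ y ∈ S, ∃ V : Set Y, IsOpen V ∧ V ∩ S = {y} := by
  have hrc : IsClosed (Set.range F) := (isCompact_range hF).isClosed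
  set C := closure S with hC
  have hCr : C ⊆ Set.range F := closure_minimal hSr hrc
  have hCc : IsClosed C := isClosed_closure
  have hCne : C.Nonempty := hSne.closure
  set 𝒯 : Set (Set X) := {T | T ⊆ F ⁻¹' C ∧ IsClosed T ∧ C ⊆ F '' T} with h𝒯
  have hG : F ⁻¹' C ∈ 𝒯 := by
    refine ⟨subset_rfl, hCc.preimage hF, ?_⟩
    intro y hy
    obtain ⟨x, hx⟩ := hCr hy
    exact ⟨x, by simp [hx, hy], hx⟩
  have hchain : ∀ c ⊆ 𝒯, IsChain (· ⊆ ·) c → c.Nonempty →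
      ∃ lb ∈ 𝒯, ∀ s ∈ c, lb ⊆ s := by
    intro c hc hchain hcne
    refine ⟨⋂₀ c, ⟨?_, ?_, ?_⟩, fun s hs => Set.sInter_subset_of_mem hs⟩
    · obtain ⟨T, hT⟩ := hcne
      exact (Set.sInter_subset_of_mem hT).trans (hc hT).1
    · exact isClosed_sInter fun T hT => (hc hT).2.1
    · intro y hy
      have key : (⋂ T : c, (T.1 ∩ F ⁻¹' {y})).Nonempty := by
        haveI : Nonempty c := hcne.to_subtype
        apply IsCompact.nonempty_iInter_of_directed_nonempty_isCompact_isClosed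
        · intro T T'
          rcases hchain.total T.2 T'.2 with h | h
          · exact ⟨T, subset_rfl, Set.inter_subset_inter_left _ h⟩
          · exact ⟨T', Set.inter_subset_inter_left _ h, subset_rfl⟩
        · intro T
          obtain ⟨x, hxT, hxy⟩ := (hc T.2).2.2 hy
          exact ⟨x, hxT, hxy⟩
        · intro T
          exact (((hc T.2).2.1).inter (isClosed_singleton.preimage hF)).isCompact
        · intro T
          exact ((hc T.2).2.1).inter (isClosed_singleton.preimage hF)
      obtain ⟨x, hx⟩ := key
      rw [Set.mem_iInter] at hx
      refine ⟨x, ?_, (hx ⟨_, hcne.choose_spec⟩).2⟩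
      rw [Set.mem_sInter]
      exact fun T hT => (hx ⟨T, hT⟩).1
  obtain ⟨m, -, hm𝒯, hmmin⟩ := zorn_superset_nonempty 𝒯 hchain _ hG
  obtain ⟨hmG, hmc, hmC⟩ := hm𝒯
  have hmne : m.Nonempty := by
    obtain ⟨y, hy⟩ := hCne
    obtain ⟨x, hx, -⟩ := hmC hy
    exact ⟨x, hx⟩
  obtain ⟨x, hxm, U, hU, hUm⟩ := hX m hmne
  set m' := m \ {x} with hm'
  have hm'c : IsClosed m' := by
    have : m' = m ∩ Uᶜ := by
      ext z
      simp only [hm', Set.mem_diff, Set.mem_singleton_iff, Set.mem_inter_iff, Set.mem_compl_iff]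
      constructor
      · rintro ⟨hz, hzx⟩
        refine ⟨hz, fun hzU => hzx ?_⟩
        have : z ∈ U ∩ m := ⟨hzU, hz⟩
        rw [hUm] at this; exact this
      · rintro ⟨hz, hzU⟩
        refine ⟨hz, fun hzx => hzU ?_⟩
        subst hzx
        have : z ∈ U ∩ m := by rw [hUm]; rfl
        exact this.1
    rw [this]
    exact hmc.inter hU.isClosed_compl
  have hnotall : ¬ C ⊆ F '' m' := by
    intro hsub
    have : m' = m := Set.Subset.antisymm Set.diff_subset
      (hmmin ⟨(Set.diff_subset).trans hmG, hm'c, hsub⟩ Set.diff_subset)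
    rw [← this] at hxm
    exact hxm.2 rfl
  obtain ⟨y, hyC, hym'⟩ := Set.not_subset.1 hnotall
  obtain ⟨t, htm, hty⟩ := hmC hyC
  have htx : t = x := by
    by_contra hc
    exact hym' ⟨t, ⟨htm, hc⟩, hty⟩
  subst htx
  set V : Set Y := (F '' m')ᶜ with hV
  have hVo : IsOpen V := ((hm'c.isCompact.image hF).isClosed).isOpen_compl
  have hVC : V ∩ C = {y} := by
    apply Set.Subset.antisymm
    · rintro z ⟨hzV, hzC⟩
      obtain ⟨t', htm', htz⟩ := hmC hzC
      have : t' = t := by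
        by_contra hc
        exact hzV ⟨t', ⟨htm', hc⟩, htz⟩
      subst this
      rw [← hty, htz]; rfl
    · rintro z rfl
      exact ⟨hym', hyC⟩
  obtain ⟨hyS, hUS⟩ := isolated_of_isolated_closure hVo hVC
  exact ⟨y, hyS, V, hVo, hUS⟩

/-- A continuous map from a scattered compact Hausdorff space into `ℕ → ℝ` has countable range. -/
theorem scattered_range_countable {X : Type*} [TopologicalSpace X] [CompactSpace X] [T2Space X]
    (hX : IsScattered X) {F : X → ℕ → ℝ} (hF : Continuous F) : (Set.range F).Countable := by
  have hrc : IsClosed (Set.range F) := (isCompact_range hF).isClosed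
  obtain ⟨V, D, hVct, hDperf, hVD⟩ := exists_countable_union_perfect_of_isClosed hrc
  have hD : D = ∅ := by
    by_contra hc
    obtain ⟨y, hyD, W, hW, hWD⟩ := scattered_image hX hF (Set.nonempty_iff_ne_empty.2 hc)
      (fun z hz => hVD ▸ Set.mem_union_right V hz)
    have hacc := hDperf.acc y hyD
    rw [accPt_iff_nhds] at hacc
    obtain ⟨z, hzWD, hzy⟩ := hacc W (hW.mem_nhds (by
      have : y ∈ W ∩ D := hWD ▸ rfl
      exact this.1))
    have : z ∈ W ∩ D := hzWD
    rw [hWD] at this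
    exact hzy this
  rw [hVD, hD]
  simpa using hVct

theorem scattered_implies_cz {X : Type*} [TopologicalSpace X] [CompactSpace X] [T2Space X]
    (hX : IsScattered X) :
    ∀ A : Set X, (∃ Z : ℕ → Set X, (∀ n, IsZeroSet (Z n)) ∧ A = ⋃ n, Z n) →
      (∃ U : ℕ → Set X, (∀ n, IsZeroSet (U n)ᶜ) ∧ A = ⋂ n, U n) := by
  rintro A ⟨Z, hZ, rfl⟩
  choose f hf hfZ using hZ
  set g : ℕ → X → ℝ := fun n x => min |f n x| 1 with hg
  have hgcont : ∀ n, Continuous (g n) := fun n => (hf n).abs.min continuous_const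
  have hgzero : ∀ n x, g n x = 0 ↔ x ∈ Z n := by
    intro n x
    rw [hfZ n]
    simp only [hg, Set.mem_preimage, Set.mem_singleton_iff]
    constructor
    · intro h
      rcases min_eq_iff.1 h with ⟨h1, -⟩ | ⟨h1, h2⟩
      · exact abs_eq_zero.1 h1
      · linarith
    · intro h
      simp [h]
  set F : X → ℕ → ℝ := fun x n => g n x with hF
  have hFcont : Continuous F := continuous_pi fun n => hgcont n
  have hrct : (Set.range F).Countable := scattered_range_countable hX hFcont
  set B : Set (ℕ → ℝ) := F '' (⋃ n, Z n) with hB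
  set p : ℕ → ℝ := fun _ => 2 with hp
  have hpF : p ∉ Set.range F := by
    rintro ⟨x, hx⟩
    have h1 : F x 0 ≤ 1 := min_le_right _ _
    rw [hx] at h1
    norm_num [hp] at h1
  set D : Set (ℕ → ℝ) := (Set.range F \ B) ∪ {p} with hD
  have hDct : D.Countable :=
    (hrct.mono Set.diff_subset).union (Set.countable_singleton p)
  have hDne : D.Nonempty := ⟨p, Set.mem_union_right _ rfl⟩
  obtain ⟨e, he⟩ := hDct.exists_eq_range hDne
  have hDB : ∀ y ∈ D, y ∉ B := by
    rintro y (⟨-, hy⟩ | hy)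
    · exact hy
    · intro hyB
      obtain ⟨x, -, hx⟩ := hyB
      rw [Set.mem_singleton_iff] at hy
      exact hpF ⟨x, hx.trans hy⟩
  refine ⟨fun m => (F ⁻¹' {e m})ᶜ, ?_, ?_⟩
  · intro m
    rw [compl_compl]
    have : F ⁻¹' {e m} = ⋂ n, (fun x => g n x) ⁻¹' {e m n} := by
      ext x
      simp only [Set.mem_preimage, Set.mem_singleton_iff, Set.mem_iInter, funext_iff]
      exact Iff.rfl
    rw [this]
    exact zs_iInter fun n => zs_preimage_singleton (hgcont n) _
  · ext x
    simp only [Set.mem_iInter, Set.mem_compl_iff, Set.mem_preimage, Set.mem_singleton_iff]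
    constructor
    · intro hx m hc
      have hxB : F x ∈ B := ⟨x, hx, rfl⟩
      have : e m ∈ D := by rw [he]; exact ⟨m, rfl⟩
      exact hDB (e m) this (hc ▸ hxB)
    · intro h
      have hFD : F x ∉ D := by
        intro hd
        rw [he] at hd
        obtain ⟨m, hm⟩ := hd
        exact h m hm.symm
      have hFB : F x ∈ B := by
        by_contra hc
        exact hFD (Set.mem_union_left _ ⟨Set.mem_range_self x, hc⟩)
      obtain ⟨a, haZ, haF⟩ := hFB
      obtain ⟨n, hn⟩ := Set.mem_iUnion.1 haZ
      have : g n a = 0 := (hgzero n a).2 hn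
      have hgx : g n x = 0 := by
        have := congrFun haF n
        simp only [hF] at this
        rw [← this]
        exact (hgzero n a).2 hn
      exact Set.mem_iUnion.2 ⟨n, (hgzero n x).1 hgx⟩

theorem compact_isCZSpace_iff_scattered' {X : Type*} [TopologicalSpace X]
    [CompactSpace X] [T2Space X] :
    (∀ A : Set X, (∃ Z : ℕ → Set X, (∀ n, IsZeroSet (Z n)) ∧ A = ⋃ n, Z n) →
      (∃ U : ℕ → Set X, (∀ n, IsZeroSet (U n)ᶜ) ∧ A = ⋂ n, U n)) ↔ IsScattered X :=
  ⟨cz_implies_scattered, scattered_implies_cz⟩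


/-- A compact Hausdorff space is a `CZ`-space iff it is scattered. -/
theorem compact_isCZSpace_iff_scattered {X : Type*} [TopologicalSpace X]
    [CompactSpace X] [T2Space X] :
    IsCZSpace X ↔ IsScattered X :=
  ⟨fun h => cz_implies_scattered h, fun h => scattered_implies_cz h⟩
end

section
/- If X is a compact Hausdorff space that is not scattered, then X is not a CZ-space: there is a Zer_σ-set in X which is not a Coz_δ-set. -/
open Set Filter Topology

section Aux

lemma exists_binary_expansion {y : ℝ} (hy : y ∈ Set.Icc (0:ℝ) 1) :
    ∃ σ : ℕ → Bool, HasSum (fun n => (cond (σ n) 1 0 : ℝ) / 2 ^ (n + 1)) y := by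
  set r : ℕ → ℝ := fun n => Nat.rec y (fun _ rn => 2 * rn - (if 1 ≤ 2 * rn then 1 else 0)) n with hr
  have hrsucc : ∀ n, r (n + 1) = 2 * r n - (if 1 ≤ 2 * r n then 1 else 0) := fun n => rfl
  have hmem : ∀ n, r n ∈ Set.Icc (0:ℝ) 1 := by
    intro n
    induction n with
    | zero => exact hy
    | succ n ih =>
      obtain ⟨h0, h1⟩ := ih
      rw [hrsucc]
      split_ifs with hc
      · constructor <;> linarith
      · push_neg at hc
        constructor <;> linarith
  refine ⟨fun n => decide (1 ≤ 2 * r n), ?_⟩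
  have key : ∀ n, ∑ k ∈ Finset.range n,
      (cond (decide (1 ≤ 2 * r k)) 1 0 : ℝ) / 2 ^ (k + 1) = y - r n / 2 ^ n := by
    intro n
    induction n with
    | zero =>
      have hr0 : r 0 = y := rfl
      simp [hr0]
    | succ n ih =>
      rw [Finset.sum_range_succ, ih, hrsucc]
      by_cases hc : 1 ≤ 2 * r n
      · rw [if_pos hc, decide_eq_true (by exact hc)]
        simp only [cond_true]; ring
      · rw [if_neg hc, decide_eq_false (by exact hc)]
        simp only [cond_false]; ring
  rw [hasSum_iff_tendsto_nat_of_nonneg]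
  · have hten : Tendsto (fun n => r n / 2 ^ n) atTop (𝓝 (0:ℝ)) := by
      apply squeeze_zero (fun n => div_nonneg (hmem n).1 (by positivity))
        (g := fun n => (1/2 : ℝ) ^ n)
      · intro n
        rw [div_pow, one_pow, div_le_div_iff₀ (by positivity) (by positivity), one_mul]
        calc r n * 2 ^ n ≤ 1 * 2 ^ n := by
              have := (hmem n).2; nlinarith [pow_pos (by norm_num : (0:ℝ) < 2) n]
          _ = 2 ^ n := by ring
      · exact tendsto_pow_atTop_nhds_zero_of_lt_one (by norm_num) (by norm_num)
    have := tendsto_const_nhds (x := y) (f := atTop (α := ℕ)) |>.sub hten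
    simp only [sub_zero] at this
    simp only [key]
    exact this
  · intro n
    rcases hd : decide (1 ≤ 2 * r n) <;> simp [hd]

section Tree
variable {X : Type*} [TopologicalSpace X] [T25Space X]

open Classical in
noncomputable def splitSet (C : Set X) (b : Bool) : Set X :=
  if h : Perfect C ∧ C.Nonempty then
    if b then (h.1.splitting h.2).choose_spec.choose
    else (h.1.splitting h.2).choose
  else ∅

lemma splitSet_spec {C : Set X} (h1 : Perfect C) (h2 : C.Nonempty) :
    (∀ b, Perfect (splitSet C b) ∧ (splitSet C b).Nonempty ∧ splitSet C b ⊆ C) ∧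
      Disjoint (splitSet C false) (splitSet C true) := by
  have h : Perfect C ∧ C.Nonempty := ⟨h1, h2⟩
  have hs := (h.1.splitting h.2).choose_spec.choose_spec
  have hf : splitSet C false = (h.1.splitting h.2).choose := by
    simp [splitSet, dif_pos h]
  have ht : splitSet C true = (h.1.splitting h.2).choose_spec.choose := by
    simp [splitSet, dif_pos h]
  refine ⟨?_, ?_⟩
  · intro b
    cases b
    · rw [hf]; exact hs.1
    · rw [ht]; exact hs.2.1
  · rw [hf, ht]; exact hs.2.2

noncomputable def tree (C : Set X) : List Bool → Set X
  | [] => C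
  | b :: s => splitSet (tree C s) b

lemma tree_perfect {C : Set X} (h1 : Perfect C) (h2 : C.Nonempty) :
    ∀ s : List Bool, Perfect (tree C s) ∧ (tree C s).Nonempty
  | [] => ⟨h1, h2⟩
  | b :: s => by
    obtain ⟨hp, hn⟩ := tree_perfect h1 h2 s
    exact ⟨((splitSet_spec hp hn).1 b).1, ((splitSet_spec hp hn).1 b).2.1⟩

lemma tree_subset {C : Set X} (h1 : Perfect C) (h2 : C.Nonempty) (b : Bool) (s : List Bool) :
    tree C (b :: s) ⊆ tree C s := by
  obtain ⟨hp, hn⟩ := tree_perfect h1 h2 s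
  exact ((splitSet_spec hp hn).1 b).2.2

lemma tree_disjoint {C : Set X} (h1 : Perfect C) (h2 : C.Nonempty) :
    ∀ s t : List Bool, s.length = t.length → s ≠ t → Disjoint (tree C s) (tree C t) := by
  intro s
  induction s with
  | nil =>
    intro t hlen hne
    cases t with
    | nil => exact absurd rfl hne
    | cons c t' => simp at hlen
  | cons b s' ih =>
    intro t hlen hne
    cases t with
    | nil => simp at hlen
    | cons c t' =>
      simp only [List.length_cons, Nat.succ.injEq] at hlen
      by_cases hst : s' = t'
      · subst hst
        have hbc : b ≠ c := fun hbc => hne (by rw [hbc])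
        obtain ⟨hp, hn⟩ := tree_perfect h1 h2 s'
        have hd := (splitSet_spec hp hn).2
        cases b <;> cases c <;> simp_all [tree]
        · exact hd.symm
      · exact ((ih t' (by omega) hst).mono (tree_subset h1 h2 b s') (tree_subset h1 h2 c t'))
end Tree

lemma perfect_of_not_scattered {X : Type*} [TopologicalSpace X]
    (h : ¬ IsScattered X) :
    ∃ C : Set X, Perfect C ∧ C.Nonempty := by
  rw [IsScattered] at h
  push_neg at h
  obtain ⟨S, hSne, hS⟩ := h
  refine ⟨closure S, ⟨isClosed_closure, ?_⟩, hSne.closure⟩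
  intro x hx
  rw [accPt_iff_nhds]
  intro U hU
  by_contra hcon
  push_neg at hcon
  obtain ⟨V, hVU, hVopen, hxV⟩ := mem_nhds_iff.mp hU
  have hne : (V ∩ S).Nonempty := mem_closure_iff.mp hx V hVopen hxV
  have hsub : V ∩ S ⊆ {x} := by
    rintro y ⟨hyV, hyS⟩
    exact hcon y ⟨hVU hyV, subset_closure hyS⟩
  obtain ⟨y, hy⟩ := hne
  have hyx : y = x := hsub hy
  subst hyx
  have heq : V ∩ S = {y} := hsub.antisymm (by rintro z rfl; exact hy)
  exact hS y hy.2 V hVopen heq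

lemma isMeagre_of_closed_empty_interior {Y : Type*} [TopologicalSpace Y] {s : Set Y}
    (hc : IsClosed s) (hi : interior s = ∅) : IsMeagre s :=
  isMeagre_iff_countable_union_isNowhereDense.mpr
    ⟨{s}, by simp [IsNowhereDense, hc.closure_eq, hi], countable_singleton _, by simp⟩

lemma IsMeagre.union' {Y : Type*} [TopologicalSpace Y] {s t : Set Y}
    (hs : IsMeagre s) (ht : IsMeagre t) : IsMeagre (s ∪ t) := by
  have hm : IsMeagre (⋃ n : ℕ, if n = 0 then s else t) :=
    isMeagre_iUnion fun n => by split <;> assumption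
  apply hm.mono
  intro x hx
  rcases hx with hx | hx
  · exact mem_iUnion.mpr ⟨0, by simpa using hx⟩
  · exact mem_iUnion.mpr ⟨1, by simpa using hx⟩

end Aux

/-- A non-scattered compact Hausdorff space is not a `CZ`-space: it has a `Zer_σ`-set which
is not a `Coz_δ`-set. -/
theorem compact_not_scattered_not_CZ {X : Type*} [TopologicalSpace X]
    [CompactSpace X] [T2Space X] (h : ¬ IsScattered X) :
    ∃ A : Set X, IsZerSigma A ∧ ¬ IsCozDelta A := by
  obtain ⟨C, hCp, hCne⟩ := perfect_of_not_scattered h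
  have hKperf := tree_perfect hCp hCne
  have hKclosed : ∀ s, IsClosed (tree C s) := fun s => (hKperf s).1.closed
  set A : ℕ → Set X := fun n => ⋃ l ∈ {l : List Bool | l.length = n}, tree C (false :: l) with hAdef
  set B : ℕ → Set X := fun n => ⋃ l ∈ {l : List Bool | l.length = n}, tree C (true :: l) with hBdef
  have hAclosed : ∀ n, IsClosed (A n) := fun n =>
    (List.finite_length_eq Bool n).isClosed_biUnion fun l _ => hKclosed _
  have hBclosed : ∀ n, IsClosed (B n) := fun n =>
    (List.finite_length_eq Bool n).isClosed_biUnion fun l _ => hKclosed _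
  have hABdisj : ∀ n, Disjoint (A n) (B n) := by
    intro n
    rw [Set.disjoint_left]
    intro x hxA hxB
    simp only [hAdef, hBdef, mem_iUnion, mem_setOf_eq] at hxA hxB
    obtain ⟨l, hl, hxl⟩ := hxA
    obtain ⟨m, hm, hxm⟩ := hxB
    exact (tree_disjoint hCp hCne (false :: l) (true :: m)
      (by simp [hl, hm]) (by simp)).le_bot ⟨hxl, hxm⟩
  choose g hg0 hg1 hg01 using fun n =>
    exists_continuous_zero_one_of_isClosed (hAclosed n) (hBclosed n) (hABdisj n)
  set f : X → ℝ := fun x => ∑' n, g n x / 2 ^ (n + 1) with hfdef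
  have hf : Continuous f := by
    apply continuous_tsum (u := fun n => (1/2 : ℝ) ^ (n + 1))
    · exact fun n => ((g n).continuous).div_const _
    · simpa [pow_succ] using (summable_geometric_two).mul_right (1/2 : ℝ)
    · intro n x
      have h01 := hg01 n x
      rw [div_pow, one_pow, Real.norm_eq_abs, abs_div,
        abs_of_nonneg (by positivity : (0:ℝ) ≤ 2 ^ (n + 1))]
      have : |g n x| ≤ 1 := abs_le.mpr ⟨by linarith [h01.1], h01.2⟩
      exact (div_le_div_iff_of_pos_right (by positivity)).mpr this
  have hrange : Set.Icc (0:ℝ) 1 ⊆ Set.range f := by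
    rintro y hy
    obtain ⟨σ, hσ⟩ := exists_binary_expansion hy
    set l : ℕ → List Bool := fun n => Nat.rec [] (fun k lk => σ k :: lk) n with hldef
    have hlsucc : ∀ n, l (n + 1) = σ n :: l n := fun n => rfl
    have hllen : ∀ n, (l n).length = n := by
      intro n
      induction n with
      | zero => rfl
      | succ n ih => rw [hlsucc]; simp [ih]
    have hne : (⋂ n, tree C (l n)).Nonempty := by
      apply IsCompact.nonempty_iInter_of_sequence_nonempty_isCompact_isClosed
      · intro n; rw [hlsucc]; exact tree_subset hCp hCne _ _
      · intro n; exact (hKperf _).2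
      · exact (hKclosed _).isCompact
      · intro n; exact hKclosed _
    obtain ⟨x, hx⟩ := hne
    refine ⟨x, ?_⟩
    have hgx : ∀ n, g n x = cond (σ n) 1 0 := by
      intro n
      have hxn : x ∈ tree C (σ n :: l n) := by
        have := mem_iInter.mp hx (n + 1)
        rwa [hlsucc] at this
      cases hσn : σ n
      · rw [hσn] at hxn
        have hxA : x ∈ A n := by
          simp only [hAdef, mem_iUnion, mem_setOf_eq]
          exact ⟨l n, hllen n, hxn⟩
        simpa using hg0 n hxA
      · rw [hσn] at hxn
        have hxB : x ∈ B n := by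
          simp only [hBdef, mem_iUnion, mem_setOf_eq]
          exact ⟨l n, hllen n, hxn⟩
        simpa using hg1 n hxB
    show f x = y
    rw [hfdef]
    calc ∑' n, g n x / 2 ^ (n + 1)
        = ∑' n, (cond (σ n) 1 0 : ℝ) / 2 ^ (n + 1) := tsum_congr fun n => by rw [hgx n]
      _ = y := hσ.tsum_eq
  set e : ℕ → ℚ := fun n => (Denumerable.eqv ℚ).symm n with hedef
  have hesurj : ∀ q : ℚ, ∃ n, e n = q := fun q => ⟨Denumerable.eqv ℚ q, by simp [hedef]⟩
  set Z : ℕ → Set X := fun n => f ⁻¹' {((e n : ℚ) : ℝ)} with hZdef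
  refine ⟨⋃ n, Z n, ⟨Z, fun n => ⟨fun x => f x - (e n : ℝ), hf.sub continuous_const, ?_⟩, rfl⟩, ?_⟩
  · ext x
    simp [hZdef, sub_eq_zero]
  rintro ⟨U, hU, hA⟩
  have hUc : ∀ n, IsClosed (U n)ᶜ := by
    intro n
    obtain ⟨z, hz, hzeq⟩ := hU n
    rw [hzeq]
    exact isClosed_singleton.preimage hz
  set F : ℕ → Set ℝ := fun n => f '' (U n)ᶜ with hFdef
  have hFclosed : ∀ n, IsClosed (F n) := fun n => (((hUc n).isCompact).image hf).isClosed
  have hFirr : ∀ n, ∀ y ∈ F n, ∀ q : ℚ, y ≠ (q : ℝ) := by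
    rintro n y ⟨x, hxU, rfl⟩ q hq
    obtain ⟨m, hm⟩ := hesurj q
    have hxZ : x ∈ ⋃ k, Z k := mem_iUnion.mpr ⟨m, by simp [hZdef, hm, hq]⟩
    rw [hA] at hxZ
    exact hxU (mem_iInter.mp hxZ n)
  have hFint : ∀ n, interior (F n) = ∅ := by
    intro n
    by_contra hcon
    obtain ⟨z, hz⟩ := nonempty_iff_ne_empty.mpr hcon
    obtain ⟨q, hq⟩ :=
      (Rat.denseRange_cast (𝕜 := ℝ)).exists_mem_open isOpen_interior ⟨z, hz⟩
    exact hFirr n _ (interior_subset hq) q rfl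
  have hmF : IsMeagre (⋃ n, F n) :=
    isMeagre_iUnion fun n => isMeagre_of_closed_empty_interior (hFclosed n) (hFint n)
  have hmQ : IsMeagre (⋃ n, ({((e n : ℚ) : ℝ)} : Set ℝ)) :=
    isMeagre_iUnion fun n =>
      isMeagre_of_closed_empty_interior isClosed_singleton (interior_singleton _)
  have hcover : Set.Icc (0:ℝ) 1 ⊆ (⋃ n, F n) ∪ (⋃ n, ({((e n : ℚ) : ℝ)} : Set ℝ)) := by
    intro y hy
    obtain ⟨x, rfl⟩ := hrange hy
    by_cases hq : ∃ q : ℚ, f x = (q : ℝ)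
    · obtain ⟨q, hfq⟩ := hq
      obtain ⟨m, hm⟩ := hesurj q
      right
      exact mem_iUnion.mpr ⟨m, by simp [hm, hfq]⟩
    · push_neg at hq
      have hxA : x ∉ ⋂ n, U n := by
        rw [← hA]
        intro hxA
        obtain ⟨m, hm⟩ := mem_iUnion.mp hxA
        exact hq (e m) hm
      obtain ⟨n, hn⟩ := by simpa only [mem_iInter, not_forall] using hxA
      left
      exact mem_iUnion.mpr ⟨n, ⟨x, hn, rfl⟩⟩
  have hmeagre : IsMeagre (Set.Icc (0:ℝ) 1) := (hmF.union' hmQ).mono hcover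
  have hdense : Dense (Set.Icc (0:ℝ) 1)ᶜ := dense_of_mem_residual hmeagre
  obtain ⟨z, hz1, hz2⟩ := hdense.exists_mem_open isOpen_Ioo
    (⟨1/2, by norm_num⟩ : (Set.Ioo (0:ℝ) 1).Nonempty)
  exact hz1 (Set.Ioo_subset_Icc_self hz2)
end

section
/- If every subset of a Tychonoff space X is a CZ-set, then every real-valued function on X lies in the pointwise closure of a countable set of continuous functions; in particular, the indicator of any A ⊆ X is a pointwise limit of a sequence of continuous functions. -/
lemma indicator_baireOne {X : Type*} [TopologicalSpace X]
    {A : Set X} (hA : IsCZSet A) : IsBaireOne (A.indicator fun _ => (1 : ℝ)) := by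
  obtain ⟨⟨Z, hZ, hAeq⟩, ⟨U, hU, hAeq'⟩⟩ := hA
  choose p hp hpz using hZ
  choose q hq hqz using hU
  -- F n x = 0 iff x ∈ Z i for some i ≤ n
  set F : ℕ → X → ℝ := fun n x => ∏ i ∈ Finset.range (n+1), p i x with hF
  set F' : ℕ → X → ℝ := fun n x => ∏ i ∈ Finset.range (n+1), q i x with hF'
  have hFcont : ∀ n, Continuous (F n) := fun n =>
    continuous_finset_prod _ (fun i _ => hp i)
  have hF'cont : ∀ n, Continuous (F' n) := fun n =>
    continuous_finset_prod _ (fun i _ => hq i)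
  have hFzero : ∀ n x, F n x = 0 ↔ ∃ i ≤ n, x ∈ Z i := by
    intro n x
    rw [hF]
    simp only [Finset.prod_eq_zero_iff, Finset.mem_range, Nat.lt_succ_iff]
    constructor
    · rintro ⟨i, hi, hpi⟩
      exact ⟨i, hi, by rw [hpz i]; exact hpi⟩
    · rintro ⟨i, hi, hxi⟩
      refine ⟨i, hi, ?_⟩
      have := hpz i ▸ hxi
      exact this
  have hF'zero : ∀ n x, F' n x = 0 ↔ ∃ i ≤ n, x ∈ (U i)ᶜ := by
    intro n x
    rw [hF']
    simp only [Finset.prod_eq_zero_iff, Finset.mem_range, Nat.lt_succ_iff]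
    constructor
    · rintro ⟨i, hi, hpi⟩
      exact ⟨i, hi, by rw [hqz i]; exact hpi⟩
    · rintro ⟨i, hi, hxi⟩
      refine ⟨i, hi, ?_⟩
      rw [hqz i] at hxi; exact hxi
  -- F zero implies x ∈ A; F' zero implies x ∉ A
  have hFA : ∀ n x, F n x = 0 → x ∈ A := by
    intro n x hx
    obtain ⟨i, _, hxi⟩ := (hFzero n x).mp hx
    rw [hAeq]; exact Set.mem_iUnion.mpr ⟨i, hxi⟩
  have hF'A : ∀ n x, F' n x = 0 → x ∉ A := by
    intro n x hx hxA
    obtain ⟨i, _, hxi⟩ := (hF'zero n x).mp hx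
    exact hxi (by rw [hAeq'] at hxA; exact Set.mem_iInter.mp hxA i)
  have hden : ∀ n x, |F n x| + |F' n x| ≠ 0 := by
    intro n x hzero
    have h1 : F n x = 0 := by
      have := abs_nonneg (F n x); have := abs_nonneg (F' n x)
      have : |F n x| = 0 := by linarith
      exact abs_eq_zero.mp this
    have h2 : F' n x = 0 := by
      have := abs_nonneg (F n x); have := abs_nonneg (F' n x)
      have : |F' n x| = 0 := by linarith
      exact abs_eq_zero.mp this
    exact hF'A n x h2 (hFA n x h1)
  refine ⟨fun n x => |F' n x| / (|F n x| + |F' n x|), fun n => ?_, fun x => ?_⟩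
  · exact ((hF'cont n).abs).div (((hFcont n).abs).add ((hF'cont n).abs)) (hden n)
  · by_cases hx : x ∈ A
    · rw [Set.indicator_of_mem hx]
      have : x ∈ ⋃ n, Z n := hAeq ▸ hx
      obtain ⟨N, hN⟩ := Set.mem_iUnion.mp this
      apply tendsto_atTop_of_eventually_const (i₀ := N)
      intro n hn
      have hFn : F n x = 0 := (hFzero n x).mpr ⟨N, hn, hN⟩
      have hF'n : F' n x ≠ 0 := fun hc => (hF'A n x hc) hx
      show |F' n x| / (|F n x| + |F' n x|) = 1
      rw [hFn, abs_zero, zero_add]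
      exact div_self (abs_ne_zero.mpr hF'n)
    · rw [Set.indicator_of_notMem hx]
      have : x ∈ ⋃ n, (U n)ᶜ := by
        by_contra hc
        apply hx
        rw [hAeq']
        simp only [Set.mem_iUnion, not_exists, Set.mem_compl_iff, not_not] at hc
        exact Set.mem_iInter.mpr hc
      obtain ⟨N, hN⟩ := Set.mem_iUnion.mp this
      apply tendsto_atTop_of_eventually_const (i₀ := N)
      intro n hn
      have hF'n : F' n x = 0 := (hF'zero n x).mpr ⟨N, hn, hN⟩
      show |F' n x| / (|F n x| + |F' n x|) = 0
      rw [hF'n, abs_zero]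
      exact zero_div _

lemma IsBaireOne.const_mul {X : Type*} [TopologicalSpace X] {f : X → ℝ}
    (hf : IsBaireOne f) (c : ℝ) : IsBaireOne (fun x => c * f x) := by
  obtain ⟨g, hg, hgf⟩ := hf
  exact ⟨fun n x => c * g n x, fun n => continuous_const.mul (hg n),
    fun x => (hgf x).const_mul c⟩

lemma baireOne_sum {X : Type*} [TopologicalSpace X] {ι : Type*} (s : Finset ι)
    (f : ι → X → ℝ) (hf : ∀ i ∈ s, IsBaireOne (f i)) :
    IsBaireOne (fun x => ∑ i ∈ s, f i x) := by
  classical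
  induction s using Finset.induction_on with
  | empty => exact ⟨fun _ _ => 0, fun _ => continuous_const, fun x => by
      simpa using tendsto_const_nhds⟩
  | insert a t hni ih =>
    obtain ⟨g, hg, hgf⟩ := hf a (Finset.mem_insert_self a t)
    obtain ⟨G, hG, hGf⟩ := ih (fun i hi => hf i (Finset.mem_insert_of_mem hi))
    refine ⟨fun n x => g n x + G n x, fun n => (hg n).add (hG n), fun x => ?_⟩
    have := (hgf x).add (hGf x)
    simpa [Finset.sum_insert hni] using this

lemma approx_mem_closure {X : Type*} [TopologicalSpace X] (f : X → ℝ)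
    (hind : ∀ A : Set X, IsBaireOne (A.indicator fun _ => (1 : ℝ))) :
    ∃ S : Set (X → ℝ), S.Countable ∧ (∀ g ∈ S, Continuous g) ∧ f ∈ closure S := by
  classical
  -- clamp and simple approximation
  set c : ℕ → X → ℝ := fun n x => max (min (f x) n) (-(n : ℝ)) with hc
  set s : ℕ → X → ℝ := fun n x => (⌊(2 ^ n : ℝ) * c n x⌋ : ℝ) / 2 ^ n with hs
  have h2pos : ∀ n : ℕ, (0 : ℝ) < 2 ^ n := fun n => by positivity
  -- each s n is Baire one
  have hsB : ∀ n, IsBaireOne (s n) := by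
    intro n
    have key : s n = fun x => ∑ k ∈ Finset.Icc (-(n * 2 ^ n) : ℤ) (n * 2 ^ n),
        ((k : ℝ) / 2 ^ n) * ({y | ⌊(2 ^ n : ℝ) * c n y⌋ = k}.indicator (fun _ => (1:ℝ)) x) := by
      funext x
      set k₀ : ℤ := ⌊(2 ^ n : ℝ) * c n x⌋ with hk0
      have hcx : -(n : ℝ) ≤ c n x ∧ c n x ≤ n := by
        constructor
        · exact le_max_right _ _
        · exact max_le (min_le_right _ _) (neg_le_self (Nat.cast_nonneg n))
      have hmem : k₀ ∈ Finset.Icc (-(n * 2 ^ n) : ℤ) (n * 2 ^ n) := by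
        rw [Finset.mem_Icc]
        constructor
        · have : ((-(n * 2 ^ n) : ℤ) : ℝ) ≤ (2 ^ n : ℝ) * c n x := by
            push_cast
            nlinarith [hcx.1, h2pos n]
          calc (-(n * 2 ^ n) : ℤ) = ⌊((-(n * 2 ^ n) : ℤ) : ℝ)⌋ := (Int.floor_intCast _).symm
            _ ≤ k₀ := Int.floor_le_floor this
        · have : (2 ^ n : ℝ) * c n x ≤ ((n * 2 ^ n : ℤ) : ℝ) := by
            push_cast
            nlinarith [hcx.2, h2pos n]
          calc k₀ ≤ ⌊((n * 2 ^ n : ℤ) : ℝ)⌋ := Int.floor_le_floor this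
            _ = (n * 2 ^ n : ℤ) := Int.floor_intCast _
      rw [Finset.sum_eq_single k₀]
      · rw [Set.indicator_of_mem (by exact rfl), mul_one]
      · intro k hk hne
        rw [Set.indicator_of_notMem, mul_zero]
        simp only [Set.mem_setOf_eq]
        exact fun hcontra => hne (by rw [← hcontra, hk0])
      · intro hnot; exact absurd hmem hnot
    rw [key]
    apply baireOne_sum
    intro k _
    exact (hind _).const_mul _
  -- choose witnesses
  choose G hGcont hGlim using hsB
  refine ⟨Set.range (fun p : ℕ × ℕ => G p.1 p.2), Set.countable_range _, ?_, ?_⟩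
  · rintro g ⟨⟨n, m⟩, rfl⟩
    exact hGcont n m
  · -- s n ∈ closure S, and s n → f pointwise
    have hsn_mem : ∀ n, s n ∈ closure (Set.range (fun p : ℕ × ℕ => G p.1 p.2)) := by
      intro n
      apply mem_closure_of_tendsto (f := fun m => G n m) (b := Filter.atTop)
      · exact tendsto_pi_nhds.mpr (hGlim n)
      · exact Filter.Eventually.of_forall fun m => ⟨(n, m), rfl⟩
    have hsf : Filter.Tendsto s Filter.atTop (nhds f) := by
      rw [tendsto_pi_nhds]
      intro x
      rw [Metric.tendsto_atTop]
      intro ε hε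
      obtain ⟨M, hM⟩ := exists_pow_lt_of_lt_one hε (by norm_num : (1:ℝ)/2 < 1)
      refine ⟨max M ⌈|f x|⌉₊, fun n hn => ?_⟩
      have hnM : M ≤ n := le_trans (le_max_left _ _) hn
      have hnf : |f x| ≤ n := by
        calc |f x| ≤ ⌈|f x|⌉₊ := Nat.le_ceil _
          _ ≤ n := by exact_mod_cast le_trans (le_max_right _ _) hn
      have hcl : c n x = f x := by
        rw [hc]
        simp only []
        rw [min_eq_left (le_of_abs_le hnf), max_eq_left]
        exact neg_le_of_abs_le hnf
      have h1 : s n x ≤ f x := by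
        rw [hs]; simp only [hcl]
        rw [div_le_iff₀ (h2pos n)]
        linarith [Int.floor_le ((2 ^ n : ℝ) * f x)]
      have h2 : f x - s n x < (1/2) ^ n := by
        have hfl := Int.lt_floor_add_one ((2 ^ n : ℝ) * f x)
        have hkey : f x < ((⌊(2 ^ n : ℝ) * f x⌋ : ℝ) + 1) / 2 ^ n := by
          rw [lt_div_iff₀ (h2pos n)]
          linarith [mul_comm (f x) ((2:ℝ) ^ n), hfl]
        rw [hs]; simp only [hcl]
        rw [div_pow, one_pow, sub_lt_iff_lt_add, ← add_div, add_comm]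
        exact hkey
      rw [Real.dist_eq, abs_sub_comm, abs_of_nonneg (by linarith)]
      calc f x - s n x < (1/2) ^ n := h2
        _ ≤ (1/2) ^ M := pow_le_pow_of_le_one (by norm_num) (by norm_num) hnM
        _ < ε := hM
    have := mem_closure_of_tendsto hsf (Filter.Eventually.of_forall hsn_mem)
    rwa [closure_closure] at this

/-- If every subset of `X` is a `CZ`-set, then every real-valued function on `X` lies in the
pointwise closure of a countable set of continuous functions; in particular, the indicator of
any subset is a pointwise limit of a sequence of continuous functions. -/
theorem every_subset_CZ_implies_cleavable_and_indicators_baireOne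
    {X : Type*} [TopologicalSpace X] [T35Space X]
    (h : ∀ A : Set X, IsCZSet A) :
    (∀ f : X → ℝ, ∃ S : Set (X → ℝ), S.Countable ∧ (∀ g ∈ S, Continuous g) ∧ f ∈ closure S) ∧
    (∀ A : Set X, IsBaireOne (A.indicator fun _ => (1 : ℝ))) := by
  have hind : ∀ A : Set X, IsBaireOne (A.indicator fun _ => (1 : ℝ)) :=
    fun A => indicator_baireOne (h A)
  exact ⟨fun f => approx_mem_closure f hind, hind⟩
end

section
/- Let X be a metric space. If G ⊆ X is a G_δ-set with |G| < 𝔟 (the bounding number), then G is an F_σ-set in X. -/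
/-- The bounding number `𝔟`: the least cardinality of a family in `ℕ → ℕ` that is unbounded
with respect to eventual domination `≤*`. -/
noncomputable def boundingNumber : Cardinal :=
  sInf { c : Cardinal | ∃ F : Set (ℕ → ℕ), Cardinal.mk F = c ∧
    ¬ ∃ g : ℕ → ℕ, ∀ f ∈ F, ∀ᶠ n in Filter.atTop, f n ≤ g n }

/-- In a metric space, a `G_δ`-set of cardinality `< 𝔟` is an `F_σ`-set. -/
theorem gdelta_card_lt_b_isFSigma {X : Type*} [MetricSpace X] (G : Set X)
    (hG : IsGδ G) (hcard : Cardinal.lift.{0} (Cardinal.mk G) < Cardinal.lift boundingNumber) :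
    IsFSigma G := by
  obtain ⟨U, hUopen, hUG⟩ := hG.eq_iInter_nat
  set V : ℕ → Set X := fun n => ⋂ k ≤ n, U k with hV
  have hVopen : ∀ n, IsOpen (V n) := by
    intro n
    apply Set.Finite.isOpen_biInter (Set.finite_Iic n)
    exact fun k _ => hUopen k
  have hVanti : ∀ {n m : ℕ}, n ≤ m → V m ⊆ V n := by
    intro n m hnm x hx
    simp only [hV, Set.mem_iInter] at hx ⊢
    exact fun k hk => hx k (hk.trans hnm)
  have hGV : G = ⋂ n, V n := by
    rw [hUG]
    ext x
    simp only [hV, Set.mem_iInter]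
    exact ⟨fun h n k _ => h k, fun h n => h n n le_rfl⟩
  -- choose witnesses
  have hmem : ∀ x ∈ G, ∀ n : ℕ, ∃ k : ℕ, ∀ y ∉ V n, 1 / ((k : ℝ) + 1) ≤ dist x y := by
    intro x hx n
    have hxV : x ∈ V n := by rw [hGV] at hx; exact Set.mem_iInter.mp hx n
    obtain ⟨ε, hε, hball⟩ := Metric.isOpen_iff.mp (hVopen n) x hxV
    obtain ⟨k, hk⟩ := exists_nat_one_div_lt hε
    refine ⟨k, fun y hy => ?_⟩
    by_contra hlt
    push_neg at hlt
    exact hy (hball (by rw [Metric.mem_ball, dist_comm]; exact hlt.trans ((hk.trans_le le_rfl).trans_le le_rfl)))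
  choose! f hf using hmem
  -- the family of functions
  set F : Set (ℕ → ℕ) := f '' G with hF
  have hdom : ∃ g : ℕ → ℕ, ∀ h ∈ F, ∀ᶠ n in Filter.atTop, h n ≤ g n := by
    by_contra hcon
    have hb : boundingNumber ≤ Cardinal.mk F := csInf_le' ⟨F, rfl, hcon⟩
    have h2 : Cardinal.lift.{u_1} (Cardinal.mk F) ≤ Cardinal.lift.{0} (Cardinal.mk G) :=
      Cardinal.mk_image_le_lift
    have h3 : Cardinal.lift boundingNumber ≤ Cardinal.lift.{u_1} (Cardinal.mk F) :=
      Cardinal.lift_le.mpr hb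
    exact absurd ((h3.trans h2).trans_lt hcard) (lt_irrefl _)
  obtain ⟨g, hg⟩ := hdom
  -- the closed sets
  set E : ℕ → Set X := fun m =>
    ⋂ n, ⋂ (_ : m ≤ n), ⋂ y ∈ (V n)ᶜ, {x | 1 / ((g n : ℝ) + 1) ≤ dist x y} with hE
  refine ⟨E, ?_, ?_⟩
  · intro m
    exact isClosed_iInter fun n => isClosed_iInter fun _ => isClosed_iInter fun y =>
      isClosed_iInter fun _ => isClosed_le continuous_const
        (Continuous.dist continuous_id continuous_const)
  · ext x
    simp only [hE, Set.mem_iUnion, Set.mem_iInter, Set.mem_compl_iff, Set.mem_setOf_eq]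
    constructor
    · intro hx
      have hev := hg (f x) ⟨x, hx, rfl⟩
      obtain ⟨m, hm⟩ := Filter.eventually_atTop.mp hev
      refine ⟨m, fun n hn y hy => ?_⟩
      have h1 : 1 / ((g n : ℝ) + 1) ≤ 1 / ((f x n : ℝ) + 1) := by
        apply one_div_le_one_div_of_le
        · positivity
        · exact_mod_cast Nat.add_le_add_right (hm n hn) 1
      exact h1.trans (hf x hx n y hy)
    · rintro ⟨m, hm⟩
      rw [hGV]
      refine Set.mem_iInter.mpr fun n => ?_
      have hxm : x ∈ V m := by
        by_contra hxm
        have := hm m le_rfl x hxm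
        rw [dist_self] at this
        have : (0:ℝ) < 1 / ((g m : ℝ) + 1) := by positivity
        linarith [hm m le_rfl x hxm, dist_self x]
      rcases le_or_gt n m with h | h
      · exact hVanti h hxm
      · by_contra hxn
        have := hm n h.le x hxn
        rw [dist_self] at this
        have h0 : (0:ℝ) < 1 / ((g n : ℝ) + 1) := by positivity
        linarith
end

section
/- If X is a separable metrizable space with |X| < 𝔟, then every G_δ subset of X is F_σ. -/
/-- In a separable metrizable space of cardinality `< 𝔟`, every `G_δ` subset is `F_σ`. -/
theorem sep_metrizable_card_lt_b_gdelta_fsigma {X : Type*} [TopologicalSpace X]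
    [TopologicalSpace.MetrizableSpace X] [TopologicalSpace.SeparableSpace X]
    (hcard : Cardinal.lift.{0} (Cardinal.mk X) < Cardinal.lift boundingNumber) :
    ∀ G : Set X, IsGδ G → IsFSigma G := by
  classical
  letI : MetricSpace X := TopologicalSpace.metrizableSpaceMetric X
  intro G hG
  obtain ⟨U, hUopen, rfl⟩ := hG.eq_iInter_nat
  -- closed approximations of each open set
  set F : ℕ → ℕ → Set X := fun n m => {x | ∀ y ∈ (U n)ᶜ, (1:ℝ)/(m+1) ≤ dist x y} with hFdef
  have hFclosed : ∀ n m, IsClosed (F n m) := by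
    intro n m
    have : F n m = ⋂ y ∈ (U n)ᶜ, {x : X | (1:ℝ)/(m+1) ≤ dist x y} := by
      ext x; simp [hFdef, Set.mem_iInter]
    rw [this]
    exact isClosed_biInter fun y _ =>
      isClosed_le continuous_const (Continuous.dist continuous_id continuous_const)
  have hFmono : ∀ n m m', m ≤ m' → F n m ⊆ F n m' := by
    intro n m m' h x hx y hy
    refine le_trans ?_ (hx y hy)
    apply one_div_le_one_div_of_le
    · positivity
    · have : (m:ℝ) ≤ m' := Nat.cast_le.mpr h
      linarith
  have hFsub : ∀ n m, F n m ⊆ U n := by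
    intro n m x hx
    by_contra h
    have h2 := hx x h
    rw [dist_self] at h2
    have : (0:ℝ) < 1/(m+1) := by positivity
    linarith
  have hUcov : ∀ n, U n ⊆ ⋃ m, F n m := by
    intro n x hx
    obtain ⟨ε, hε, hball⟩ := Metric.isOpen_iff.mp (hUopen n) x hx
    obtain ⟨m, hm⟩ := exists_nat_one_div_lt hε
    refine Set.mem_iUnion.2 ⟨m, fun y hy => ?_⟩
    by_contra h
    push_neg at h
    exact hy (hball (by rw [Metric.mem_ball, dist_comm]; linarith))
  have hchoice : ∀ x ∈ ⋂ n, U n, ∀ n, ∃ m, x ∈ F n m := fun x hx n =>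
    Set.mem_iUnion.1 (hUcov n (Set.mem_iInter.1 hx n))
  let φ : (⋂ n, U n : Set X) → ℕ → ℕ := fun x n => (hchoice x x.2 n).choose
  have hφ : ∀ (x : (⋂ n, U n : Set X)) (n : ℕ), (x : X) ∈ F n (φ x n) :=
    fun x n => (hchoice x x.2 n).choose_spec
  -- boundedness from |X| < 𝔟
  obtain ⟨g, hg⟩ : ∃ g : ℕ → ℕ, ∀ f ∈ Set.range φ, ∀ᶠ n in Filter.atTop, f n ≤ g n := by
    by_contra h
    have hmem : Cardinal.mk (Set.range φ) ∈ { c : Cardinal | ∃ F : Set (ℕ → ℕ),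
        Cardinal.mk F = c ∧ ¬ ∃ g : ℕ → ℕ, ∀ f ∈ F, ∀ᶠ n in Filter.atTop, f n ≤ g n } :=
      ⟨Set.range φ, rfl, h⟩
    have h1 : boundingNumber ≤ Cardinal.mk (Set.range φ) := csInf_le' hmem
    have h2 : Cardinal.lift (Cardinal.mk (Set.range φ)) ≤
        Cardinal.lift.{0} (Cardinal.mk (⋂ n, U n : Set X)) := Cardinal.mk_range_le_lift
    have h3 : Cardinal.mk (⋂ n, U n : Set X) ≤ Cardinal.mk X := Cardinal.mk_subtype_le _
    have h4 : Cardinal.lift boundingNumber ≤ Cardinal.lift (Cardinal.mk (Set.range φ)) :=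
      Cardinal.lift_le.mpr h1
    have h5 : Cardinal.lift.{0} (Cardinal.mk (⋂ n, U n : Set X)) ≤
        Cardinal.lift.{0} (Cardinal.mk X) := Cardinal.lift_le.mpr h3
    exact absurd ((h5.trans_lt hcard).trans_le (h4.trans h2)) (lt_irrefl _)
  -- build the F_sigma decomposition
  let e : ℕ ≃ ℕ × ℕ := (Denumerable.eqv (ℕ × ℕ)).symm
  let C : ℕ × ℕ → Set X := fun p => ⋂ n, F n (if n < p.1 then p.2 else g n)
  have hCclosed : ∀ p, IsClosed (C p) := fun p => isClosed_iInter fun n => hFclosed _ _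
  have hCsub : ∀ p, C p ⊆ ⋂ n, U n := fun p x hx =>
    Set.mem_iInter.2 fun n => hFsub n _ (Set.mem_iInter.1 hx n)
  refine ⟨fun i => C (e i), fun i => hCclosed _, ?_⟩
  apply Set.Subset.antisymm
  · intro x hx
    obtain ⟨k, hk⟩ := Filter.eventually_atTop.mp (hg (φ ⟨x, hx⟩) ⟨⟨x, hx⟩, rfl⟩)
    set m := (Finset.range k).sup (φ ⟨x, hx⟩) with hm
    refine Set.mem_iUnion.2 ⟨e.symm (k, m), ?_⟩
    have : e (e.symm (k, m)) = (k, m) := e.apply_symm_apply _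
    rw [this]
    refine Set.mem_iInter.2 fun n => ?_
    by_cases hn : n < k
    · simp only [if_pos hn]
      exact hFmono n _ _ (Finset.le_sup (Finset.mem_range.2 hn)) (hφ ⟨x, hx⟩ n)
    · simp only [if_neg hn]
      exact hFmono n _ _ (hk n (le_of_not_gt hn)) (hφ ⟨x, hx⟩ n)
  · exact Set.iUnion_subset fun i => hCsub (e i)
end
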